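/- Let G be a finite bridgeless multigraph with a total order on E(G), A a finite abelian group, and b : V(G) → A locally zero-sum. Then for every i with 0 ≤ i ≤ m(G), the coefficient a_i(G,b) (the number of i-edge subsets S with G−S b-compatible and S containing no b-compatible broken bond) is a positive integer, since a_i(G,0) ≤ a_i(G,b) and a_i(G,0) ≥ 1. -/

import Mathlib

open Finset

attribute [local instance] Classical.propDecidable

universe u v w

/-- Adjacency through a present edge in the spanning subgraph with edge predicate `ok`. -/
def edgeRel {V E : Type*} (head tail : E → V) (ok : E → Prop) (u v : V) : Prop :=
  ∃ e, ok e ∧ ((head e = u ∧ tail e = v) ∨ (head e = v ∧ tail e = u))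

/-- Reachability (same connected component) in the spanning subgraph. -/
def Reach {V E : Type*} (head tail : E → V) (ok : E → Prop) : V → V → Prop :=
  Relation.EqvGen (edgeRel head tail ok)

/-- Number of connected components of the spanning subgraph. -/
noncomputable def ncomp {V E : Type*} (head tail : E → V) (ok : E → Prop) : ℕ :=
  Nat.card (Quotient (Relation.EqvGen.setoid (edgeRel head tail ok)))

/-- Boundary of an edge-valued function, via the orientation `head`/`tail`. -/
noncomputable def bdry {V E A : Type*} [Fintype E] [AddCommGroup A]
    (head tail : E → V) (f : E → A) (v : V) : A :=
  ∑ e : E, ((if head e = v then f e else 0) - (if tail e = v then f e else 0))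

/-- Boundary of an edge-valued function on the spanning subgraph with edges `ok`. -/
noncomputable def bdrySub {V E A : Type*} [Fintype E] [AddCommGroup A]
    (head tail : E → V) (ok : E → Prop) (f : {e : E // ok e} → A) (v : V) : A :=
  ∑ e : {e : E // ok e}, ((if head e.1 = v then f e else 0) - (if tail e.1 = v then f e else 0))

/-- `b` sums to zero over every connected component of the spanning subgraph
(`b`-compatibility / locally zero-sum). -/
def Compatible {V E A : Type*} [Fintype V] [AddCommGroup A]
    (head tail : E → V) (ok : E → Prop) (b : V → A) : Prop :=
  ∀ v : V, (∑ u : V, if Reach head tail ok u v then b u else 0) = 0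

/-- A bond: a minimal nonempty edge set whose deletion changes the number of components,
equivalently a minimal nonempty edge cut. -/
def IsBond {V E : Type*} (head tail : E → V) (F : Finset E) : Prop :=
  F.Nonempty ∧ ncomp head tail (fun e => e ∉ F) ≠ ncomp head tail (fun _ => True) ∧
    ∀ F' : Finset E, F' ⊂ F → ncomp head tail (fun e => e ∉ F') = ncomp head tail (fun _ => True)

/-- Cycle rank `m(G-S) = |E(G-S)| - |V| + c(G-S)` of the spanning subgraph `G-S`. -/
noncomputable def cycRank {V E : Type*} [Fintype V] [Fintype E]
    (head tail : E → V) (S : Finset E) : ℕ :=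
  (Fintype.card E - S.card) + ncomp head tail (fun e => e ∉ S) - Fintype.card V

/-- A `b`-compatible bond. -/
def IsCBond {V E A : Type*} [Fintype V] [AddCommGroup A]
    (head tail : E → V) (b : V → A) (F : Finset E) : Prop :=
  IsBond head tail F ∧ Compatible head tail (fun e => e ∉ F) b

/-- A `b`-compatible broken bond w.r.t. the total order `lo` on edges. -/
def IsCBrokenBond {V E A : Type*} [Fintype V] [AddCommGroup A]
    (head tail : E → V) (lo : LinearOrder E) (b : V → A) (B : Finset E) : Prop :=
  ∃ F : Finset E, IsCBond head tail b F ∧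
    ∃ hne : F.Nonempty, B = F.erase (@Finset.max' E lo F hne)

/-- The signless coefficient `a_i(G,b)`: the number of `i`-edge subsets `S` with `G-S`
`b`-compatible and `S` containing no `b`-compatible broken bond. -/
noncomputable def aCoeff {V E A : Type*} [Fintype V] [Fintype E] [AddCommGroup A]
    (head tail : E → V) (lo : LinearOrder E) (b : V → A) (i : ℕ) : ℕ :=
  Nat.card {S : Finset E // S.card = i ∧ Compatible head tail (fun e => e ∉ S) b ∧
    ∀ B : Finset E, IsCBrokenBond head tail lo b B → ¬ B ⊆ S}

/-- Adjacency inside the induced subgraph on the vertex set `X`. -/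
def edgeRelIn {V E : Type*} (head tail : E → V) (X : Set V) (u v : V) : Prop :=
  ∃ e, head e ∈ X ∧ tail e ∈ X ∧ ((head e = u ∧ tail e = v) ∨ (head e = v ∧ tail e = u))

/-- Reachability within the induced subgraph on `X`. -/
def ReachIn {V E : Type*} (head tail : E → V) (X : Set V) : V → V → Prop :=
  Relation.EqvGen (edgeRelIn head tail X)

def setoidOn {V E : Type*} (head tail : E → V) (X : Set V) : Setoid {v : V // v ∈ X} :=
  ⟨fun a b => ReachIn head tail X a.1 b.1,
   ⟨fun a => Relation.EqvGen.refl a.1, fun h => Relation.EqvGen.symm _ _ h, fun h h' => Relation.EqvGen.trans _ _ _ h h'⟩⟩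

/-- Number of connected components of the induced subgraph on `X`. -/
noncomputable def ncompOn {V E : Type*} (head tail : E → V) (X : Set V) : ℕ :=
  Nat.card (Quotient (setoidOn head tail X))

/-- `X ∈ Λ(G)`: `X` nonempty, `G[X]` connected and `c(G-X) = c(G)`. -/
def InLambda {V E : Type*} [Fintype V] (head tail : E → V) (X : Finset V) : Prop :=
  X.Nonempty ∧ (∀ u ∈ X, ∀ v ∈ X, ReachIn head tail (↑X) u v) ∧
    ncompOn head tail ((↑X : Set V)ᶜ) = ncomp head tail (fun _ => True)


/-! Order the edges by `lo` and run Kruskal's algorithm: an edge is kept iff its endpoints are not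
already joined by smaller edges. The kept edges form a spanning forest `T`, so `|T| ≤ |V| - c(G)`
and at least `m(G)` edges lie outside `T`. Any `i` of them form a set `S` with `G - S` having the
components of `G`, hence `b`-compatible. The least edge of a bond is always kept by Kruskal, and
in a bridgeless graph it differs from the greatest one, so it lies in every broken bond; thus no
broken bond fits inside `S`, and `a_i(G, b) ≥ 1`. -/

section Reachability

variable {V E : Type*} (head tail : E → V)

theorem reach_symm {ok : E → Prop} {x y : V} (h : Reach head tail ok x y) :
    Reach head tail ok y x :=
  Relation.EqvGen.symm _ _ h

theorem reach_mono {ok ok' : E → Prop} (h : ∀ e, ok e → ok' e) {x y : V}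
    (hr : Reach head tail ok x y) : Reach head tail ok' x y :=
  Relation.EqvGen.mono (fun _ _ ⟨e, he, hor⟩ => ⟨e, h e he, hor⟩) _ _ hr

theorem reach_of_edge {ok : E → Prop} {e : E} (he : ok e) :
    Reach head tail ok (head e) (tail e) :=
  Relation.EqvGen.rel _ _ ⟨e, he, Or.inl ⟨rfl, rfl⟩⟩

theorem reach_of_forall_edge {ok ok' : E → Prop}
    (h : ∀ e, ok e → Reach head tail ok' (head e) (tail e)) {x y : V}
    (hr : Reach head tail ok x y) : Reach head tail ok' x y := by
  refine (Relation.EqvGen.is_equivalence _).eqvGen_iff.mp (Relation.EqvGen.mono ?_ _ _ hr)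
  rintro u v ⟨e, he, ⟨rfl, rfl⟩ | ⟨rfl, rfl⟩⟩
  exacts [h e he, reach_symm head tail (h e he)]

theorem ncomp_congr {ok ok' : E → Prop}
    (h : ∀ x y, Reach head tail ok x y ↔ Reach head tail ok' x y) :
    ncomp head tail ok = ncomp head tail ok' := by
  rw [ncomp, ncomp, show Relation.EqvGen.setoid (edgeRel head tail ok)
    = Relation.EqvGen.setoid (edgeRel head tail ok') from Setoid.ext h]

theorem compatible_congr [Fintype V] {A : Type*} [AddCommGroup A] {ok ok' : E → Prop}
    {b : V → A} (h : ∀ x y, Reach head tail ok x y ↔ Reach head tail ok' x y) :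
    Compatible head tail ok b ↔ Compatible head tail ok' b := by
  simp only [Compatible, h]

theorem ncomp_of_forall_not [Fintype V] {ok : E → Prop} (h : ∀ e, ¬ ok e) :
    ncomp head tail ok = Fintype.card V := by
  have hdiscrete : ∀ x y : V, Reach head tail ok x y → x = y := by
    refine fun x y hr => Relation.EqvGen.rec (fun _ _ hxy => absurd hxy.choose_spec.1 (h _))
      (fun _ => rfl) (fun _ _ _ ih => ih.symm) (fun _ _ _ _ _ ih₁ ih₂ => ih₁.trans ih₂) hr
  rw [← Nat.card_eq_fintype_card]
  exact (Nat.card_eq_of_bijective (Quotient.mk _)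
    ⟨fun x y hxy => hdiscrete x y (Quotient.exact hxy), Quotient.mk_surjective⟩).symm

theorem ncomp_add_one_le_of_not_reach [Finite V] {ok : E → Prop} {e : E}
    (h : ¬ Reach head tail ok (head e) (tail e)) :
    ncomp head tail (fun f => ok f ∨ f = e) + 1 ≤ ncomp head tail ok := by
  let proj : Quotient (Relation.EqvGen.setoid (edgeRel head tail ok)) →
      Quotient (Relation.EqvGen.setoid (edgeRel head tail (fun f => ok f ∨ f = e))) :=
    Quotient.map id fun _ _ => reach_mono head tail fun _ => Or.inl
  have hsurj : Function.Surjective proj := Quotient.ind fun v => ⟨Quotient.mk _ v, rfl⟩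
  have hninj : ¬ Function.Injective proj := fun hinj =>
    h (Quotient.exact (hinj (Quotient.sound (reach_of_edge head tail (Or.inr rfl)))))
  have := Fintype.ofFinite (Quotient (Relation.EqvGen.setoid (edgeRel head tail ok)))
  have := Fintype.ofFinite
    (Quotient (Relation.EqvGen.setoid (edgeRel head tail (fun f => ok f ∨ f = e))))
  have hlt := Fintype.card_lt_of_surjective_not_injective proj hsurj hninj
  simp only [ncomp, Nat.card_eq_fintype_card]
  omega

end Reachability

section Kruskal

variable {V E : Type*} (head tail : E → V) [LinearOrder E]

def IsKruskalEdge (e : E) : Prop :=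
  ¬ Reach head tail (· < e) (head e) (tail e)

theorem reach_kruskal_of_edge [Finite E] (e : E) :
    Reach head tail (IsKruskalEdge head tail) (head e) (tail e) := by
  induction e using WellFoundedLT.induction with
  | _ e ih =>
    by_cases he : IsKruskalEdge head tail e
    · exact reach_of_edge head tail he
    · exact reach_of_forall_edge head tail ih (not_not.mp he)

theorem reach_iff_of_kruskal_le [Finite E] {ok : E → Prop}
    (h : ∀ e, IsKruskalEdge head tail e → ok e) {x y : V} :
    Reach head tail ok x y ↔ Reach head tail (fun _ => True) x y :=
  ⟨reach_mono head tail fun _ _ => trivial, fun hr => reach_mono head tail h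
    (reach_of_forall_edge head tail (fun e _ => reach_kruskal_of_edge head tail e) hr)⟩

/-- Each edge of `W` is a bridge relative to the smaller edges of `W`, i.e. `W` is a forest. -/
theorem ncomp_add_card_le_of_forest [Fintype V] (W : Finset E)
    (hW : ∀ e ∈ W, ¬ Reach head tail (fun f => f ∈ W ∧ f < e) (head e) (tail e)) :
    ncomp head tail (· ∈ W) + W.card ≤ Fintype.card V := by
  induction W using Finset.strongInduction with
  | H W ih =>
    rcases W.eq_empty_or_nonempty with rfl | hne
    · simpa using (ncomp_of_forall_not head tail fun _ => id).le
    set e := W.max' hne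
    have heW : e ∈ W := W.max'_mem hne
    have hsplit : (· ∈ W) = fun f => f ∈ W.erase e ∨ f = e := by
      ext f; by_cases hf : f = e <;> simp [hf, heW]
    have hbridge : ¬ Reach head tail (· ∈ W.erase e) (head e) (tail e) :=
      fun hr => hW e heW <| reach_mono head tail (fun f hf => ⟨mem_of_mem_erase hf,
        (W.le_max' f (mem_of_mem_erase hf)).lt_of_ne (ne_of_mem_erase hf)⟩) hr
    have hmerge := ncomp_add_one_le_of_not_reach head tail hbridge
    have ihW := ih (W.erase e) (erase_ssubset heW) fun f hf hr => hW f (mem_of_mem_erase hf)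
      (reach_mono head tail (fun g hg => ⟨mem_of_mem_erase hg.1, hg.2⟩) hr)
    have hcard := card_erase_add_one heW
    rw [hsplit]
    omega

theorem card_kruskal_add_ncomp_le [Fintype V] [Fintype E] :
    (univ.filter (IsKruskalEdge head tail)).card + ncomp head tail (fun _ => True)
      ≤ Fintype.card V := by
  have hforest := ncomp_add_card_le_of_forest head tail (univ.filter (IsKruskalEdge head tail))
    fun e he hr => (mem_filter.mp he).2 (reach_mono head tail (fun _ hf => hf.2) hr)
  rw [ncomp_congr head tail fun x y =>
    reach_iff_of_kruskal_le head tail fun e he => mem_filter.mpr ⟨mem_univ e, he⟩] at hforest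
  omega

/-- The least edge `g` of a bond `F` cannot close a cycle with smaller edges: those avoid `F`, so
`G - (F \ {g})` would have the components of `G - F`, contradicting the minimality of `F`. -/
theorem IsBond.isKruskalEdge_min' {F : Finset E} (hF : IsBond head tail F) (hne : F.Nonempty) :
    IsKruskalEdge head tail (F.min' hne) := by
  obtain ⟨-, hcut, hmin⟩ := hF
  set g := F.min' hne
  intro hg
  have hgF : Reach head tail (· ∉ F) (head g) (tail g) :=
    reach_mono head tail (fun f hf hfF => (F.min'_le f hfF).not_gt hf) hg
  have hsame : ∀ x y,
      Reach head tail (· ∉ F.erase g) x y ↔ Reach head tail (· ∉ F) x y := by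
    refine fun x y => ⟨reach_of_forall_edge head tail fun f hf => ?_,
      reach_mono head tail fun f hf hfg => hf (mem_of_mem_erase hfg)⟩
    by_cases hfg : f = g
    · exact hfg ▸ hgF
    · exact reach_of_edge head tail fun hfF => hf (mem_erase.mpr ⟨hfg, hfF⟩)
  exact hcut ((ncomp_congr head tail hsame).symm.trans (hmin _ (erase_ssubset (F.min'_mem hne))))

end Kruskal

/-- positivity of the coefficients for bridgeless graphs. -/
theorem stmt16 {V E A : Type*} [Fintype V] [Fintype E] [AddCommGroup A]
    (head tail : E → V) (lo : LinearOrder E) (b : V → A)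
    (hbridgeless : ∀ F : Finset E, IsBond head tail F → F.card ≠ 1)
    (hb : Compatible head tail (fun _ => True) b) :
    ∀ i : ℕ, i ≤ cycRank head tail (∅ : Finset E) → 1 ≤ aCoeff head tail lo b i := by
  let := lo
  intro i hi
  have hT := card_kruskal_add_ncomp_le head tail
  set T := univ.filter (IsKruskalEdge head tail)
  have hTE : T.card ≤ Fintype.card E := card_le_univ T
  simp only [cycRank, card_empty, notMem_empty, not_false_eq_true, Nat.sub_zero] at hi
  obtain ⟨S, hST, hS⟩ : ∃ S ⊆ univ \ T, S.card = i :=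
    exists_subset_card_eq (by rw [card_univ_sdiff]; omega)
  have hSnotT : ∀ e, IsKruskalEdge head tail e → e ∉ S := fun e he heS =>
    (mem_sdiff.mp (hST heS)).2 (mem_filter.mpr ⟨mem_univ e, he⟩)
  have hcompat : Compatible head tail (· ∉ S) b :=
    (compatible_congr head tail fun _ _ => reach_iff_of_kruskal_le head tail hSnotT).mpr hb
  have hunbroken : ∀ B, IsCBrokenBond head tail lo b B → ¬ B ⊆ S := by
    rintro B ⟨F, ⟨hF, -⟩, hne, rfl⟩ hBS
    have hlt := min'_lt_max'_of_card F (by have := hbridgeless F hF; have := hne.card_pos; omega)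
    exact hSnotT _ (hF.isKruskalEdge_min' head tail hne)
      (hBS (mem_erase.mpr ⟨hlt.ne, min'_mem F hne⟩))
  exact Nat.card_pos_iff.mpr ⟨⟨⟨S, hS, hcompat, hunbroken⟩⟩, inferInstance⟩
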